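/- arXiv:2301.05390 — 5 statements merged into one kernel-verified Lean document; each statement's English description precedes it below -/
import Mathlib

section
/- Let α ∈ ℂ and x ∈ ℂ with |x| = 1 and x ≠ α. Define y±(x) = -(x² - αx)·(1/2 ± √(1/4 - 1/(x(x-α)²))), using the principal branch of the square root. Then |y₋(x)| ≤ 1 ≤ |y₊(x)|. -/
/-!
By Vieta, `y₋ y₊ = x`, so `‖y₋‖ ‖y₊‖ = 1` on the unit circle. Writing `s` for the principal
square root, `Re s ≥ 0` gives `‖1/2 - s‖ ≤ ‖1/2 + s‖`, hence `‖y₋‖ ≤ ‖y₊‖`, and the two norms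
must lie on either side of `1`.
-/

/-- Principal-branch square root via complex power. -/
noncomputable def csqrt (z : ℂ) : ℂ := z ^ ((1:ℂ)/2)

lemma csqrt_sq (z : ℂ) : csqrt z ^ 2 = z := by
  simpa only [csqrt, one_div] using Complex.cpow_ofNat_inv_pow z 2

lemma csqrt_re_nonneg (z : ℂ) : 0 ≤ (csqrt z).re := by
  rw [csqrt, one_div, Complex.cpow_inv_two_re]
  positivity

lemma norm_sub_le_norm_add_of_inner_nonneg {F : Type*} [NormedAddCommGroup F]
    [InnerProductSpace ℝ F] {x y : F} (h : 0 ≤ inner ℝ x y) : ‖x - y‖ ≤ ‖x + y‖ := by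
  rw [← sq_le_sq₀ (norm_nonneg _) (norm_nonneg _), norm_sub_sq_real, norm_add_sq_real]
  linarith

lemma le_one_and_one_le_of_mul_eq_one {a b : ℝ} (ha : 0 ≤ a) (hab : a ≤ b) (h : a * b = 1) :
    a ≤ 1 ∧ 1 ≤ b :=
  ⟨by nlinarith, by nlinarith⟩

noncomputable def yMinus (α x : ℂ) : ℂ :=
  -(x^2 - α*x) * (1/2 - csqrt (1/4 - 1/(x*(x-α)^2)))

noncomputable def yPlus (α x : ℂ) : ℂ :=
  -(x^2 - α*x) * (1/2 + csqrt (1/4 - 1/(x*(x-α)^2)))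

lemma yMinus_mul_yPlus {α x : ℂ} (hx : x ≠ 0) (hxa : x ≠ α) : yMinus α x * yPlus α x = x := by
  have hxa' : x - α ≠ 0 := sub_ne_zero.mpr hxa
  calc yMinus α x * yPlus α x
      = (x^2 - α*x)^2 * (1/4 - csqrt (1/4 - 1/(x*(x-α)^2)) ^ 2) := by
        simp only [yMinus, yPlus]; ring
    _ = x := by
        rw [csqrt_sq]
        field_simp
        ring

lemma norm_yMinus_le_norm_yPlus (α x : ℂ) : ‖yMinus α x‖ ≤ ‖yPlus α x‖ := by
  rw [yMinus, yPlus, norm_mul, norm_mul]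
  gcongr
  apply norm_sub_le_norm_add_of_inner_nonneg
  have hre := csqrt_re_nonneg (1/4 - 1/(x*(x-α)^2))
  generalize csqrt (1/4 - 1/(x*(x-α)^2)) = s at hre ⊢
  simpa [Complex.inner] using hre

theorem stmt_0 (α x : ℂ) (hx : ‖x‖ = 1) (hxa : x ≠ α) :
    ‖(-(x^2 - α*x) * (1/2 - csqrt (1/4 - 1/(x*(x-α)^2))))‖ ≤ 1 ∧
    1 ≤ ‖(-(x^2 - α*x) * (1/2 + csqrt (1/4 - 1/(x*(x-α)^2))))‖ := by
  have hx0 : x ≠ 0 := norm_ne_zero_iff.mp (by simp [hx])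
  have hnorm : ‖yMinus α x‖ * ‖yPlus α x‖ = 1 := by
    rw [← norm_mul, yMinus_mul_yPlus hx0 hxa, hx]
  exact le_one_and_one_le_of_mul_eq_one (norm_nonneg _) (norm_yMinus_le_norm_yPlus α x) hnorm
end

section
/- For α ∈ (-1, 1), if t ∈ ℝ satisfies cos t = (α+1)/2, then e^{it}(e^{it} - α)² = α - 1 (a negative real number). -/
/-! If `z = e^{it}` then `z + z⁻¹ = 2 cos t = α + 1`, i.e. `z² - (α + 1) z + 1 = 0`, and
`z (z - α)² - (α - 1) = (z - α + 1) (z² - (α + 1) z + 1)`. -/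

theorem mul_sub_sq_eq_sub_one_of_sq_add_one_eq {R : Type*} [CommRing R] {a z : R}
    (hz : z ^ 2 + 1 = (a + 1) * z) : z * (z - a) ^ 2 = a - 1 := by
  linear_combination (z - a + 1) * hz

theorem Complex.exp_mul_I_sq_add_one (t : ℂ) :
    Complex.exp (t * Complex.I) ^ 2 + 1 = 2 * Complex.cos t * Complex.exp (t * Complex.I) := by
  have hinv : Complex.exp (t * Complex.I) * Complex.exp (-t * Complex.I) = 1 := by
    rw [← Complex.exp_add, ← add_mul, add_neg_cancel, zero_mul, Complex.exp_zero]
  rw [Complex.two_cos]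
  linear_combination -hinv

theorem stmt_6 (α t : ℝ) (hα : α ∈ Set.Ioo (-1:ℝ) 1)
    (ht : Real.cos t = (α + 1)/2) :
    Complex.exp (t * Complex.I) * (Complex.exp (t * Complex.I) - (α:ℂ))^2 = ((α : ℂ) - 1)
      ∧ α - 1 < 0 := by
  refine ⟨mul_sub_sq_eq_sub_one_of_sq_add_one_eq ?_, by linarith [hα.2]⟩
  rw [Complex.exp_mul_I_sq_add_one, ← Complex.ofReal_cos, ht]
  push_cast
  ring
end

section
/- For λ ∈ (1, 2), the polynomial p_λ(x) = x(λ² - x)(x² + (4/λ - λ²)x + 4/λ²) satisfies p_λ(x) < 0 for all x ∈ (-1, 0). -/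
/-! The quadratic factor has discriminant `-l (8 - l³) < 0`, so it is positive everywhere,
while `x (l² - x) < 0` for `x < 0`. -/

lemma quadratic_factor_eq_sq_add (l x : ℝ) (hl : l ≠ 0) :
    x ^ 2 + (4 / l - l ^ 2) * x + 4 / l ^ 2 = (x + 2 / l - l ^ 2 / 2) ^ 2 + l * (8 - l ^ 3) / 4 := by
  field_simp
  ring

lemma quadratic_factor_pos {l : ℝ} (hl0 : 0 < l) (hl2 : l < 2) (x : ℝ) :
    0 < x ^ 2 + (4 / l - l ^ 2) * x + 4 / l ^ 2 := by
  have hl3 : l ^ 3 < 2 ^ 3 := pow_lt_pow_left₀ hl2 hl0.le (by norm_num)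
  have hconst : 0 < l * (8 - l ^ 3) / 4 := by
    have : 0 < 8 - l ^ 3 := by linarith
    positivity
  rw [quadratic_factor_eq_sq_add l x hl0.ne']
  exact add_pos_of_nonneg_of_pos (sq_nonneg _) hconst

theorem stmt_11 (l : ℝ) (hl : l ∈ Set.Ioo (1:ℝ) 2) (x : ℝ) (hx : x ∈ Set.Ioo (-1:ℝ) 0) :
    x * (l^2 - x) * (x^2 + (4/l - l^2)*x + 4/l^2) < 0 := by
  obtain ⟨hl1, hl2⟩ := hl
  have hx0 : x < 0 := hx.2
  have hlin : x * (l ^ 2 - x) < 0 := mul_neg_of_neg_of_pos hx0 (by linarith [sq_nonneg l])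
  exact mul_neg_of_neg_of_pos hlin (quadratic_factor_pos (by linarith) hl2 x)
end

section
/- For α ∈ (-1, 3), the points of intersection of the curve Q_α(x,y) = y² + (x²-αx)y + x = 0 with the 2-torus {(x,y) : |x|=|y|=1} are exactly the points (e^{it}, y) with t ∈ {0, c(α), -c(α)} where c(α) = arccos((α-1)/2), and y a root of the quadratic y² + (e^{2it} - αe^{it})y + e^{it} = 0. In particular, every toric point (x,y) satisfies x ∈ {1, e^{ic(α)}, e^{-ic(α)}}. -/
/-!
On the torus `conj x = x⁻¹` and `conj y = y⁻¹`, so conjugating `Q_α(x, y) = 0` and clearing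
denominators gives `x² + (1 - αx) y + x y² = 0`; subtracting this from `x · Q_α(x, y) = 0` leaves
`(x³ - αx² + αx - 1) y = 0`. The cubic factors as `(x - 1)(x - e^{ic})(x - e^{-ic})` because
`2 cos c = α - 1`. Conversely, for such `x` the quadratic `y² + b y + x` with `b = x² - αx` is
self-inversive (`conj b · x = b`), so its roots are `y` and `1 / conj y`; if `|y| ≠ 1` this forces
`|b| = |y| + 1/|y| ≥ 2`, whereas `|b| = |x - α| < 2` for `α ∈ (-1, 3)`.
-/

open Complex ComplexConjugate

lemma norm_eq_one_of_quadratic_selfInversive {x b y : ℂ} (hx : ‖x‖ = 1) (hb : conj b * x = b)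
    (hb2 : ‖b‖ < 2) (hy : y ^ 2 + b * y + x = 0) : ‖y‖ = 1 := by
  have hconj : conj y ^ 2 + conj b * conj y + conj x = 0 := by
    simpa using congrArg conj hy
  have hxx : x * conj x = 1 := by
    rw [RCLike.mul_conj, hx]
    norm_num
  have hfac : (y * conj y - 1) * (x * (y * conj y + 1) + b * y) = 0 := by
    linear_combination x * y ^ 2 * hconj - hy - y ^ 2 * conj y * hb - y ^ 2 * hxx
  rw [RCLike.mul_conj] at hfac
  rcases mul_eq_zero.mp hfac with h | h
  · have hsq : (‖y‖ : ℂ) ^ 2 = 1 := by linear_combination h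
    exact (pow_eq_one_iff_of_nonneg (norm_nonneg y) two_ne_zero).mp (by exact_mod_cast hsq)
  · have hnorm : ‖x * ((‖y‖ ^ 2 + 1 : ℝ) : ℂ)‖ = ‖b * y‖ := by
      rw [← norm_neg (b * y)]
      congr 1
      push_cast
      linear_combination h
    rw [norm_mul, norm_mul, hx, norm_real, Real.norm_of_nonneg (by positivity)] at hnorm
    nlinarith [norm_nonneg y, sq_nonneg (‖y‖ - 1)]

lemma cubic_eq_zero_of_norm_eq_one {α : ℝ} {x y : ℂ} (hx : ‖x‖ = 1) (hy : ‖y‖ = 1)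
    (hq : y ^ 2 + (x ^ 2 - α * x) * y + x = 0) : x ^ 3 - α * x ^ 2 + α * x - 1 = 0 := by
  have hx0 : x ≠ 0 := by rintro rfl; simp at hx
  have hy0 : y ≠ 0 := by rintro rfl; simp at hy
  have hconj : conj y ^ 2 + (conj x ^ 2 - α * conj x) * conj y + conj x = 0 := by
    simpa using congrArg conj hq
  rw [← inv_eq_conj hx, ← inv_eq_conj hy] at hconj
  have hrecip : x ^ 2 + (1 - α * x) * y + x * y ^ 2 = 0 := by
    field_simp at hconj
    linear_combination hconj
  have h : (x ^ 3 - α * x ^ 2 + α * x - 1) * y = 0 := by linear_combination x * hq - hrecip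
  exact (mul_eq_zero.mp h).resolve_right hy0

lemma conj_sq_sub_mul_mul_eq_of_cubic {α : ℝ} {x : ℂ} (hx : ‖x‖ = 1)
    (h : x ^ 3 - α * x ^ 2 + α * x - 1 = 0) : conj (x ^ 2 - α * x) * x = x ^ 2 - α * x := by
  have hx0 : x ≠ 0 := by rintro rfl; simp at hx
  simp only [map_sub, map_mul, map_pow, conj_ofReal, ← inv_eq_conj hx]
  field_simp
  linear_combination -h

section Roots

variable {α c : ℝ}

lemma cubic_eq_mul_of_two_mul_cos_eq (hc : 2 * Real.cos c = α - 1) (x : ℂ) :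
    x ^ 3 - α * x ^ 2 + α * x - 1 = (x - 1) * (x - exp (c * I)) * (x - exp (-c * I)) := by
  have hsum : exp (c * I) + exp (-c * I) = α - 1 := by
    rw [← two_cos, ← ofReal_cos]
    exact_mod_cast hc
  have hprod : exp (c * I) * exp (-c * I) = 1 := by
    rw [← exp_add]
    simp
  linear_combination (x ^ 2 - x) * hsum - (x - 1) * hprod

lemma cubic_eq_zero_iff_of_two_mul_cos_eq (hc : 2 * Real.cos c = α - 1) (x : ℂ) :
    x ^ 3 - α * x ^ 2 + α * x - 1 = 0 ↔ x = 1 ∨ x = exp (c * I) ∨ x = exp (-c * I) := by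
  simp only [cubic_eq_mul_of_two_mul_cos_eq hc, mul_eq_zero, sub_eq_zero, or_assoc]

lemma norm_eq_one_and_re_of_two_mul_cos_eq (hc : 2 * Real.cos c = α - 1) {x : ℂ}
    (hx : x = 1 ∨ x = exp (c * I) ∨ x = exp (-c * I)) :
    ‖x‖ = 1 ∧ (x.re = 1 ∨ 2 * x.re = α - 1) := by
  rcases hx with rfl | rfl | rfl
  · simp
  · exact ⟨norm_exp_ofReal_mul_I c, .inr (by rw [exp_ofReal_mul_I_re, hc])⟩
  · rw [← ofReal_neg]
    exact ⟨norm_exp_ofReal_mul_I (-c), .inr (by rw [exp_ofReal_mul_I_re, Real.cos_neg, hc])⟩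

end Roots

lemma norm_sq_sub_mul_lt_two {α : ℝ} (hα : α ∈ Set.Ioo (-1 : ℝ) 3) {x : ℂ} (hx : ‖x‖ = 1)
    (hre : x.re = 1 ∨ 2 * x.re = α - 1) : ‖x ^ 2 - α * x‖ < 2 := by
  have hnorm : ‖x ^ 2 - α * x‖ = ‖x - α‖ := by
    rw [show x ^ 2 - α * x = x * (x - α) by ring, norm_mul, hx, one_mul]
  have hsq : ‖x - α‖ ^ 2 = 1 + α ^ 2 - α * (2 * x.re) := by
    rw [Complex.sq_norm, normSq_sub, normSq_eq_norm_sq, hx, normSq_ofReal]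
    simp only [conj_ofReal, re_mul_ofReal]
    ring
  obtain ⟨hα₁, hα₂⟩ := hα
  rw [hnorm]
  rcases hre with hre | hre <;> rw [hre] at hsq <;> nlinarith [norm_nonneg (x - α)]

theorem stmt_17 (α : ℝ) (hα : α ∈ Set.Ioo (-1:ℝ) 3) :
    {p : ℂ × ℂ | ‖p.1‖ = 1 ∧ ‖p.2‖ = 1 ∧
        p.2^2 + (p.1^2 - (α:ℂ)*p.1)*p.2 + p.1 = 0}
      = {p : ℂ × ℂ |
          (p.1 = 1 ∨ p.1 = Complex.exp ((Real.arccos ((α-1)/2) : ℂ) * Complex.I)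
            ∨ p.1 = Complex.exp (-(Real.arccos ((α-1)/2) : ℂ) * Complex.I)) ∧
          p.2^2 + (p.1^2 - (α:ℂ)*p.1)*p.2 + p.1 = 0} := by
  have hc : 2 * Real.cos (Real.arccos ((α - 1) / 2)) = α - 1 := by
    rw [Real.cos_arccos] <;> linarith [hα.1, hα.2]
  ext ⟨x, y⟩
  simp only [Set.mem_ofPred_eq, ← cubic_eq_zero_iff_of_two_mul_cos_eq hc]
  constructor
  · rintro ⟨hx, hy, hq⟩
    exact ⟨cubic_eq_zero_of_norm_eq_one hx hy hq, hq⟩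
  · rintro ⟨hcubic, hq⟩
    obtain ⟨hx, hre⟩ := norm_eq_one_and_re_of_two_mul_cos_eq hc
      ((cubic_eq_zero_iff_of_two_mul_cos_eq hc x).1 hcubic)
    exact ⟨hx, norm_eq_one_of_quadratic_selfInversive hx
      (conj_sq_sub_mul_mul_eq_of_cubic hx hcubic) (norm_sq_sub_mul_lt_two hα hx hre) hq, hq⟩
end

section
/- Let λ ∈ [1,2) and γ = (λ³-λ-2)/(2λ) + i·(λ+1)/(2λ)·√((2-λ)(λ³+λ-2)). Then |γ| = 1. Moreover, the nonzero roots of p_λ(x) = x(λ²-x)(x² + (4/λ - λ²)x + 4/λ²), namely λ² and (λ³-4 ± √(λ³(λ³-8)))/(2λ), all have absolute value strictly greater than 1 when λ ∈ (1,2). -/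
/-!
Both parts are direct modulus computations. For `γ`, clearing denominators shows that the squares
of its real and imaginary parts add up to `1`. For `λ ∈ (1, 2)` the radicand `λ³(λ³ - 8)` is
negative, so its principal square root is `i √(λ³(8 - λ³))` and the two quadratic roots are
complex conjugates of modulus `√((λ³ - 4)² + λ³(8 - λ³)) / (2λ) = 4 / (2λ) = 2 / λ > 1`.
-/

open Complex

namespace Complex

theorem ofReal_cpow_half_of_nonpos {r : ℝ} (hr : r ≤ 0) :
    (r : ℂ) ^ (1 / 2 : ℂ) = Real.sqrt (-r) * I := by
  have h_half : (1 / 2 : ℂ) = ((1 / 2 : ℝ) : ℂ) := by push_cast; ring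
  have h_exp : exp (Real.pi * I * ((1 / 2 : ℝ) : ℂ)) = I := by
    rw [show (Real.pi : ℂ) * I * ((1 / 2 : ℝ) : ℂ) = ((Real.pi / 2 : ℝ) : ℂ) * I by
      push_cast; ring, exp_mul_I]
    simp
  rw [ofReal_cpow_of_nonpos hr, ← ofReal_neg, h_half, ← ofReal_cpow (neg_nonneg.2 hr),
    ← Real.sqrt_eq_rpow, h_exp]

theorem norm_ofReal_add_cpow_half_of_nonpos (a : ℝ) {r : ℝ} (hr : r ≤ 0) :
    ‖(a : ℂ) + (r : ℂ) ^ (1 / 2 : ℂ)‖ = Real.sqrt (a ^ 2 - r) := by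
  rw [ofReal_cpow_half_of_nonpos hr, norm_add_mul_I, Real.sq_sqrt (neg_nonneg.2 hr),
    sub_eq_add_neg]

theorem norm_ofReal_sub_cpow_half_of_nonpos (a : ℝ) {r : ℝ} (hr : r ≤ 0) :
    ‖(a : ℂ) - (r : ℂ) ^ (1 / 2 : ℂ)‖ = Real.sqrt (a ^ 2 - r) := by
  rw [ofReal_cpow_half_of_nonpos hr, sub_eq_add_neg, ← neg_mul, ← ofReal_neg, norm_add_mul_I,
    neg_sq, Real.sq_sqrt (neg_nonneg.2 hr), sub_eq_add_neg]

end Complex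

theorem sq_add_sq_gamma_eq_one {lam : ℝ} (hlam : lam ≠ 0)
    (hrad : 0 ≤ (2 - lam) * (lam ^ 3 + lam - 2)) :
    ((lam ^ 3 - lam - 2) / (2 * lam)) ^ 2 +
      ((lam + 1) / (2 * lam) * Real.sqrt ((2 - lam) * (lam ^ 3 + lam - 2))) ^ 2 = 1 := by
  rw [mul_pow, Real.sq_sqrt hrad]
  field_simp
  ring

theorem gamma_radicand_nonneg {lam : ℝ} (hlam : lam ∈ Set.Icc (1 : ℝ) 2) :
    0 ≤ (2 - lam) * (lam ^ 3 + lam - 2) := by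
  obtain ⟨h1, h2⟩ := hlam
  have : lam ^ 3 + lam - 2 = (lam - 1) * (lam ^ 2 + lam + 2) := by ring
  rw [this]
  exact mul_nonneg (by linarith) (mul_nonneg (by linarith) (by positivity))

theorem norm_quadratic_roots_eq {lam : ℝ} (hpos : 0 < lam) (hle : lam ^ 3 ≤ 8) :
    ‖(((lam : ℂ) ^ 3 - 4) + ((lam : ℂ) ^ 3 * ((lam : ℂ) ^ 3 - 8)) ^ ((1 : ℂ) / 2)) / (2 * lam)‖
        = 2 / lam ∧
      ‖(((lam : ℂ) ^ 3 - 4) - ((lam : ℂ) ^ 3 * ((lam : ℂ) ^ 3 - 8)) ^ ((1 : ℂ) / 2)) / (2 * lam)‖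
        = 2 / lam := by
  have hr : lam ^ 3 * (lam ^ 3 - 8) ≤ 0 :=
    mul_nonpos_of_nonneg_of_nonpos (by positivity) (by linarith)
  have h_disc : Real.sqrt ((lam ^ 3 - 4) ^ 2 - lam ^ 3 * (lam ^ 3 - 8)) = 4 := by
    rw [show (lam ^ 3 - 4) ^ 2 - lam ^ 3 * (lam ^ 3 - 8) = 4 ^ 2 by ring,
      Real.sqrt_sq (by norm_num)]
  have h_den : ‖(2 : ℂ) * lam‖ = 2 * lam := by
    rw [norm_mul, Complex.norm_ofNat, norm_real, Real.norm_of_nonneg hpos.le]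
  have h_div : 4 / (2 * lam) = 2 / lam := by field_simp; norm_num
  have h_a : (lam : ℂ) ^ 3 - 4 = ((lam ^ 3 - 4 : ℝ) : ℂ) := by push_cast; rfl
  have h_r : (lam : ℂ) ^ 3 * ((lam : ℂ) ^ 3 - 8) = ((lam ^ 3 * (lam ^ 3 - 8) : ℝ) : ℂ) := by
    push_cast; rfl
  rw [h_a, h_r, norm_div, norm_div, h_den, norm_ofReal_add_cpow_half_of_nonpos _ hr,
    norm_ofReal_sub_cpow_half_of_nonpos _ hr, h_disc, h_div]
  exact ⟨rfl, rfl⟩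

theorem stmt_19 :
    (∀ lam ∈ Set.Ico (1:ℝ) 2,
      norm (((lam^3 - lam - 2)/(2*lam) : ℝ) +
        ((lam + 1)/(2*lam) * Real.sqrt ((2 - lam)*(lam^3 + lam - 2)) : ℝ) * Complex.I) = 1) ∧
    (∀ lam ∈ Set.Ioo (1:ℝ) 2,
      1 < norm ((lam:ℂ)^2) ∧
      1 < norm ((((lam:ℂ)^3 - 4) + ((lam:ℂ)^3*((lam:ℂ)^3 - 8)) ^ ((1:ℂ)/2))/(2*(lam:ℂ))) ∧
      1 < norm ((((lam:ℂ)^3 - 4) - ((lam:ℂ)^3*((lam:ℂ)^3 - 8)) ^ ((1:ℂ)/2))/(2*(lam:ℂ)))) := by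
  refine ⟨fun lam hlam => ?_, fun lam hlam => ?_⟩
  · rw [norm_add_mul_I, sq_add_sq_gamma_eq_one (by linarith [hlam.1])
      (gamma_radicand_nonneg (Set.Ico_subset_Icc_self hlam)), Real.sqrt_one]
  · obtain ⟨h1, h2⟩ := hlam
    have hpos : 0 < lam := by linarith
    obtain ⟨h_plus, h_minus⟩ := norm_quadratic_roots_eq hpos
      ((pow_le_pow_left₀ hpos.le h2.le 3).trans_eq (by norm_num))
    have h_two_div : 1 < 2 / lam := (one_lt_div hpos).2 h2
    refine ⟨?_, h_plus ▸ h_two_div, h_minus ▸ h_two_div⟩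
    rw [norm_pow, norm_real, Real.norm_of_nonneg hpos.le]
    exact one_lt_pow₀ h1 two_ne_zero
end
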